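/- Integrated multiplier bound via the Friedrichs inequality (second inequality of Lemma 4.3, Euclidean-metric instance, at a fixed time): let M ⊂ ℝⁿ be a compact measurable set, μ : ℝⁿ → ℝ a positive continuous weight, and dm := μ(x)dx the weighted Lebesgue measure on M. Let ℓ : ℝⁿ → ℝ be C² with Δ_μℓ defined as below, let ρ, τ > 0, and let w : ℝⁿ → ℝ be C¹ and u : ℝⁿ → ℝ continuous (u plays the role of ∂_t w; both square-integrable on M together with |∇w|). Define v := e^{τℓ} w and ϑ := τ((Δ_μℓ − ρ)v + 2⟨∇v, ∇ℓ⟩). Let C_F ≥ 1 satisfy ∫_M w² dm ≤ C_F ∫_M |∇w|² dm, let B_ℓ ≥ 2 sup_{x∈M} ℓ(x), and set C₃ := C_F sup_{x∈M} |∇ℓ(x)|² and C₄ := sup_{x∈M} |∇ℓ(x)| + C_F sup_{x∈M} |Δ_μℓ(x) − ρ|/2. Then ∫_M |ϑ| · e^{τℓ} |u| dm ≤ (C₃ τ + C₄) e^{B_ℓ τ} τ ∫_M (u² + |∇w|²) dm. -/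

import Mathlib

open MeasureTheory Real
noncomputable section

/-- ℝⁿ as a Euclidean space. -/
abbrev En (n : ℕ) := EuclideanSpace ℝ (Fin n)

/-- Euclidean divergence of a vector field: div X(x) = ∑ⱼ ∂ⱼXⱼ(x). -/
def vdiv {n : ℕ} (X : En n → En n) (x : En n) : ℝ :=
  ∑ j, fderiv ℝ X x (EuclideanSpace.single j 1) j

/-- Weighted divergence: div_μ X = div X + μ⁻¹⟨∇μ, X⟩. -/
def divW {n : ℕ} (μ : En n → ℝ) (X : En n → En n) (x : En n) : ℝ :=
  vdiv X x + (μ x)⁻¹ * (inner ℝ (gradient μ x) (X x) : ℝ)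

/-- Weighted Laplace–Beltrami operator: Δ_μ u = div_μ(∇u). -/
def lapW {n : ℕ} (μ : En n → ℝ) (u : En n → ℝ) (x : En n) : ℝ :=
  divW μ (fun y => gradient u y) x

/-- Hessian bilinear form D²u(x)(X,Y) = ⟨(∂(∇u))(x)X, Y⟩. -/
def hessB {n : ℕ} (u : En n → ℝ) (x : En n) (X Y : En n) : ℝ :=
  (inner ℝ (fderiv ℝ (fun y => gradient u y) x X) Y : ℝ)

/-!
Expanding the gradient of `v = e^{τℓ} w` gives
`ϑ = τ e^{τℓ} ((Δ_μℓ - ρ) w + 2τ |∇ℓ|² w + 2⟨∇w, ∇ℓ⟩)`. On `M` the coefficients are bounded by the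
suprema of `|Δ_μℓ - ρ|`, `|∇ℓ|²`, `|∇ℓ|`, and `e^{2τℓ} ≤ e^{B_ℓ τ}`; Cauchy–Schwarz and Young's
inequality `2ab ≤ a² + b²` then bound `|ϑ| e^{τℓ} |u|` pointwise by a combination of `w² + u²` and
`u² + |∇w|²`. After integration, the Friedrichs inequality (with `C_F ≥ 1`) absorbs `∫ w²` into
`C_F ∫ (u² + |∇w|²)`.
-/

open InnerProductSpace

theorem IsCompact.le_sSup_image {X : Type*} [TopologicalSpace X] {K : Set X} {f : X → ℝ}
    (hK : IsCompact K) (hf : ContinuousOn f K) {x : X} (hx : x ∈ K) : f x ≤ sSup (f '' K) :=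
  le_csSup (hK.bddAbove_image hf) (Set.mem_image_of_mem f hx)

section Gradient

variable {F : Type*} [NormedAddCommGroup F] [InnerProductSpace ℝ F] [CompleteSpace F]

theorem ContDiff.continuous_gradient {f : F → ℝ} (hf : ContDiff ℝ 1 f) :
    Continuous (gradient f) :=
  (toDual ℝ F).symm.continuous.comp (hf.continuous_fderiv one_ne_zero)

theorem ContDiff.contDiff_gradient {f : F → ℝ} {k : WithTop ℕ∞} (hf : ContDiff ℝ (k + 1) f) :
    ContDiff ℝ k (gradient f) :=
  (toDual ℝ F).symm.toContinuousLinearEquiv.contDiff.comp (hf.fderiv_right le_rfl)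

theorem gradient_exp_mul {ℓ w : F → ℝ} {x : F} (τ : ℝ) (hℓ : DifferentiableAt ℝ ℓ x)
    (hw : DifferentiableAt ℝ w x) :
    gradient (fun y => exp (τ * ℓ y) * w y) x
      = exp (τ * ℓ x) • (gradient w x + (τ * w x) • gradient ℓ x) := by
  refine ext_inner_right ℝ fun y => ?_
  have hd : HasFDerivAt (fun y => exp (τ * ℓ y) * w y) _ x :=
    (hℓ.hasFDerivAt.const_mul τ).exp.mul hw.hasFDerivAt
  rw [inner_gradient_left, hd.fderiv]
  simp only [add_apply, smul_apply, smul_eq_mul,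
    inner_smul_left, inner_add_left, inner_gradient_left, RCLike.conj_to_real]
  ring

end Gradient

section WeightedLaplacian

variable {n : ℕ}

theorem continuous_vdiv {X : En n → En n} (hX : ContDiff ℝ 1 X) : Continuous (vdiv X) :=
  continuous_finsetSum _ fun j _ =>
    (EuclideanSpace.proj j).continuous.comp
      ((hX.continuous_fderiv one_ne_zero).clm_apply continuous_const)

theorem continuous_divW {μ : En n → ℝ} {X : En n → En n} (hμ0 : ∀ x, μ x ≠ 0)
    (hμ : ContDiff ℝ 1 μ) (hX : ContDiff ℝ 1 X) : Continuous (divW μ X) :=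
  (continuous_vdiv hX).add
    ((hμ.continuous.inv₀ hμ0).mul (hμ.continuous_gradient.inner hX.continuous))

theorem continuous_lapW {μ f : En n → ℝ} (hμ0 : ∀ x, μ x ≠ 0) (hμ : ContDiff ℝ 1 μ)
    (hf : ContDiff ℝ 2 f) : Continuous (lapW μ f) :=
  continuous_divW hμ0 hμ hf.contDiff_gradient

end WeightedLaplacian

theorem abs_multiplier_mul_abs_le {F : Type*} [NormedAddCommGroup F] [InnerProductSpace ℝ F]
    {p g : F} {L w u τ SD S1 S2 : ℝ} (hτ : 0 ≤ τ) (hL : |L| ≤ SD) (hg : ‖g‖ ≤ S1)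
    (hg2 : ‖g‖ ^ 2 ≤ S2) :
    |L * w + 2 * τ * w * ‖g‖ ^ 2 + 2 * inner ℝ p g| * |u|
      ≤ (SD / 2 + τ * S2) * (w ^ 2 + u ^ 2) + S1 * (u ^ 2 + ‖p‖ ^ 2) := by
  have hSD : 0 ≤ SD := (abs_nonneg L).trans hL
  have hS1 : 0 ≤ S1 := (norm_nonneg g).trans hg
  have hS2 : 0 ≤ S2 := (sq_nonneg ‖g‖).trans hg2
  have hsum : |L * w + 2 * τ * w * ‖g‖ ^ 2 + 2 * inner ℝ p g|
      ≤ (SD + 2 * τ * S2) * |w| + 2 * S1 * ‖p‖ :=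
    calc _ ≤ |L * w| + |2 * τ * w * ‖g‖ ^ 2| + |2 * inner ℝ p g| := abs_add_three _ _ _
      _ = |L| * |w| + 2 * τ * ‖g‖ ^ 2 * |w| + 2 * |inner ℝ p g| := by
        simp only [abs_mul, abs_two, abs_of_nonneg hτ, abs_pow, abs_norm]; ring
      _ ≤ SD * |w| + 2 * τ * S2 * |w| + 2 * (‖p‖ * S1) := by
        gcongr
        exact (abs_real_inner_le_norm p g).trans (by gcongr)
      _ = (SD + 2 * τ * S2) * |w| + 2 * S1 * ‖p‖ := by ring
  have hwu : 2 * |w| * |u| ≤ w ^ 2 + u ^ 2 := by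
    simpa only [sq_abs] using two_mul_le_add_sq |w| |u|
  have hpu : 2 * ‖p‖ * |u| ≤ u ^ 2 + ‖p‖ ^ 2 := by
    simpa only [sq_abs, add_comm] using two_mul_le_add_sq ‖p‖ |u|
  calc _ ≤ ((SD + 2 * τ * S2) * |w| + 2 * S1 * ‖p‖) * |u| := by gcongr
    _ = (SD / 2 + τ * S2) * (2 * |w| * |u|) + S1 * (2 * ‖p‖ * |u|) := by ring
    _ ≤ _ := by gcongr

theorem abs_exp_multiplier_mul_le {F : Type*} [NormedAddCommGroup F] [InnerProductSpace ℝ F]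
    [CompleteSpace F] {ℓ w : F → ℝ} {x : F} {L u τ B SD S1 S2 : ℝ}
    (hℓ : DifferentiableAt ℝ ℓ x) (hw : DifferentiableAt ℝ w x) (hτ : 0 ≤ τ) (hB : 2 * ℓ x ≤ B)
    (hL : |L| ≤ SD) (hg : ‖gradient ℓ x‖ ≤ S1) (hg2 : ‖gradient ℓ x‖ ^ 2 ≤ S2) :
    |τ * (L * (exp (τ * ℓ x) * w x)
        + 2 * inner ℝ (gradient (fun y => exp (τ * ℓ y) * w y) x) (gradient ℓ x))|
        * (exp (τ * ℓ x) * |u|)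
      ≤ τ * exp (B * τ) * (SD / 2 + τ * S2) * (w x ^ 2 + u ^ 2)
        + τ * exp (B * τ) * S1 * (u ^ 2 + ‖gradient w x‖ ^ 2) := by
  set E := exp (τ * ℓ x)
  have hexp : E * E ≤ exp (B * τ) := by
    rw [← exp_add]
    exact exp_le_exp.2 (by nlinarith)
  have hfactor : τ * (L * (E * w x)
        + 2 * inner ℝ (gradient (fun y => exp (τ * ℓ y) * w y) x) (gradient ℓ x))
      = τ * E * (L * w x + 2 * τ * w x * ‖gradient ℓ x‖ ^ 2
        + 2 * inner ℝ (gradient w x) (gradient ℓ x)) := by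
    rw [gradient_exp_mul τ hℓ hw]
    simp only [real_inner_smul_left, inner_add_left, real_inner_self_eq_norm_sq]
    ring
  calc _ = τ * (E * E) * (|L * w x + 2 * τ * w x * ‖gradient ℓ x‖ ^ 2
          + 2 * inner ℝ (gradient w x) (gradient ℓ x)| * |u|) := by
        rw [hfactor, abs_mul, abs_of_nonneg (by positivity)]
        ring
    _ ≤ τ * exp (B * τ) * ((SD / 2 + τ * S2) * (w x ^ 2 + u ^ 2)
          + S1 * (u ^ 2 + ‖gradient w x‖ ^ 2)) := by
        gcongr
        exact abs_multiplier_mul_abs_le hτ hL hg hg2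
    _ = _ := by ring

theorem integral_le_of_friedrichs {α : Type*} [MeasurableSpace α] {ν : Measure α}
    {w u p μ : α → ℝ} {a b C : ℝ} (hw : Integrable (fun x => w x ^ 2 * μ x) ν)
    (hu : Integrable (fun x => u x ^ 2 * μ x) ν) (hp : Integrable (fun x => p x ^ 2 * μ x) ν)
    (hμ : ∀ x, 0 ≤ μ x) (ha : 0 ≤ a) (hC : 1 ≤ C)
    (hF : ∫ x, w x ^ 2 * μ x ∂ν ≤ C * ∫ x, p x ^ 2 * μ x ∂ν) :
    ∫ x, (a * (w x ^ 2 + u x ^ 2) + b * (u x ^ 2 + p x ^ 2)) * μ x ∂ν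
      ≤ (a * C + b) * ∫ x, (u x ^ 2 + p x ^ 2) * μ x ∂ν := by
  set W := ∫ x, w x ^ 2 * μ x ∂ν
  set U := ∫ x, u x ^ 2 * μ x ∂ν
  set P := ∫ x, p x ^ 2 * μ x ∂ν
  have hU : 0 ≤ U := integral_nonneg fun x => mul_nonneg (sq_nonneg _) (hμ x)
  have hUP : ∫ x, (u x ^ 2 + p x ^ 2) * μ x ∂ν = U + P := by
    simp only [add_mul]; exact integral_add hu hp
  have hLHS : ∫ x, (a * (w x ^ 2 + u x ^ 2) + b * (u x ^ 2 + p x ^ 2)) * μ x ∂ν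
      = a * W + (a + b) * U + b * P := by
    have hsplit : (fun x => (a * (w x ^ 2 + u x ^ 2) + b * (u x ^ 2 + p x ^ 2)) * μ x)
        = fun x => a * (w x ^ 2 * μ x) + (a + b) * (u x ^ 2 * μ x) + b * (p x ^ 2 * μ x) := by
      ext x; ring
    rw [hsplit, integral_add ((hw.const_mul a).fun_add (hu.const_mul (a + b))) (hp.const_mul b),
      integral_add (hw.const_mul a) (hu.const_mul (a + b)), integral_const_mul,
      integral_const_mul, integral_const_mul]
  have hWU : W + U ≤ C * (U + P) := by nlinarith
  rw [hLHS, hUP]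
  nlinarith [mul_le_mul_of_nonneg_left hWU ha]

theorem integrated_multiplier_bound_general
    (n : ℕ)
    (M : Set (En n)) (hMc : IsCompact M)
    (μ : En n → ℝ) (hμpos : ∀ x, 0 < μ x) (hμ : ContDiff ℝ 2 μ)
    (ℓ : En n → ℝ) (hℓ : ContDiff ℝ 2 ℓ)
    (ρ τ : ℝ) (hτ : 0 < τ)
    (w : En n → ℝ) (hw : ContDiff ℝ 1 w)
    (u : En n → ℝ) (hu : Continuous u)
    (v : En n → ℝ) (hv : v = fun x => Real.exp (τ * ℓ x) * w x)
    (ϑ : En n → ℝ)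
    (hϑ : ϑ = fun x => τ * ((lapW μ ℓ x - ρ) * v x
        + 2 * (inner ℝ (gradient v x) (gradient ℓ x) : ℝ)))
    (CF : ℝ) (hCF : 1 ≤ CF)
    (hFriedrichs : ∫ x in M, w x ^ 2 * μ x ≤ CF * ∫ x in M, ‖gradient w x‖ ^ 2 * μ x)
    (Bℓ : ℝ) (hBℓ : 2 * sSup (ℓ '' M) ≤ Bℓ)
    (C₃ : ℝ) (hC₃ : C₃ = CF * sSup ((fun x => ‖gradient ℓ x‖ ^ 2) '' M))
    (C₄ : ℝ) (hC₄ : C₄ = sSup ((fun x => ‖gradient ℓ x‖) '' M)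
        + CF * sSup ((fun x => |lapW μ ℓ x - ρ|) '' M) / 2) :
    ∫ x in M, |ϑ x| * (Real.exp (τ * ℓ x) * |u x|) * μ x
      ≤ (C₃ * τ + C₄) * Real.exp (Bℓ * τ) * τ
          * ∫ x in M, (u x ^ 2 + ‖gradient w x‖ ^ 2) * μ x := by
  subst hC₃ hC₄
  set SD := sSup ((fun x => |lapW μ ℓ x - ρ|) '' M)
  set S1 := sSup ((fun x => ‖gradient ℓ x‖) '' M)
  set S2 := sSup ((fun x => ‖gradient ℓ x‖ ^ 2) '' M)
  have hℓ1 : ContDiff ℝ 1 ℓ := hℓ.of_le one_le_two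
  have hgℓ := hℓ1.continuous_gradient
  have hlap : Continuous fun x => |lapW μ ℓ x - ρ| :=
    ((continuous_lapW (fun x => (hμpos x).ne') (hμ.of_le one_le_two) hℓ).sub continuous_const).abs
  have hpt : ∀ x ∈ M, |ϑ x| * (exp (τ * ℓ x) * |u x|) * μ x
      ≤ (τ * exp (Bℓ * τ) * (SD / 2 + τ * S2) * (w x ^ 2 + u x ^ 2)
        + τ * exp (Bℓ * τ) * S1 * (u x ^ 2 + ‖gradient w x‖ ^ 2)) * μ x := by
    subst hv hϑ
    intro x hx
    refine mul_le_mul_of_nonneg_right (abs_exp_multiplier_mul_le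
      (hℓ1.differentiable one_ne_zero x) (hw.differentiable one_ne_zero x) hτ.le ?_
      (hMc.le_sSup_image hlap.continuousOn hx)
      (hMc.le_sSup_image (f := fun x => ‖gradient ℓ x‖) hgℓ.norm.continuousOn hx)
      (hMc.le_sSup_image (f := fun x => ‖gradient ℓ x‖ ^ 2) (hgℓ.norm.pow 2).continuousOn hx))
      (hμpos x).le
    linarith [hMc.le_sSup_image hℓ.continuous.continuousOn hx]
  have hSD0 : 0 ≤ SD := Real.sSup_nonneg (by rintro _ ⟨x, -, rfl⟩; positivity)
  have hS20 : 0 ≤ S2 := Real.sSup_nonneg (by rintro _ ⟨x, -, rfl⟩; positivity)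
  have hwc := hw.continuous
  have hgwc := hw.continuous_gradient
  have hμc := hμ.continuous
  have integrableOn {f : En n → ℝ} (hf : Continuous f) : IntegrableOn f M :=
    hf.continuousOn.integrableOn_compact hMc
  calc _ ≤ _ :=
        integral_mono_of_nonneg (ae_of_all _ fun x => mul_nonneg (by positivity) (hμpos x).le)
          (integrableOn (by fun_prop)) (ae_restrict_of_forall_mem hMc.measurableSet hpt)
    _ ≤ _ :=
        integral_le_of_friedrichs (integrableOn (by fun_prop)) (integrableOn (by fun_prop))
          (integrableOn (by fun_prop)) (fun x => (hμpos x).le) (by positivity) hCF hFriedrichs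
    _ = _ := by ring

/-- integrated multiplier bound via the Friedrichs inequality
(second inequality of Lemma 4.3, Euclidean-metric instance, at a fixed time):
∫_M |ϑ| e^{τℓ} |u| dm ≤ (C₃ τ + C₄) e^{B_ℓ τ} τ ∫_M (u² + |∇w|²) dm,
where dm = μ dx, u plays the role of ∂_t w. -/
theorem integrated_multiplier_bound
    (n : ℕ) (hn : 1 ≤ n)
    (M : Set (En n)) (hMc : IsCompact M) (hMm : MeasurableSet M)
    (μ : En n → ℝ) (hμpos : ∀ x, 0 < μ x) (hμ : ContDiff ℝ 2 μ)
    (ℓ : En n → ℝ) (hℓ : ContDiff ℝ 2 ℓ)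
    (ρ τ : ℝ) (hρ : 0 < ρ) (hτ : 0 < τ)
    (w : En n → ℝ) (hw : ContDiff ℝ 1 w)
    (u : En n → ℝ) (hu : Continuous u)
    (v : En n → ℝ) (hv : v = fun x => Real.exp (τ * ℓ x) * w x)
    (ϑ : En n → ℝ)
    (hϑ : ϑ = fun x => τ * ((lapW μ ℓ x - ρ) * v x
        + 2 * (inner ℝ (gradient v x) (gradient ℓ x) : ℝ)))
    (CF : ℝ) (hCF : 1 ≤ CF)
    (hFriedrichs : ∫ x in M, w x ^ 2 * μ x ≤ CF * ∫ x in M, ‖gradient w x‖ ^ 2 * μ x)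
    (Bℓ : ℝ) (hBℓ : 2 * sSup (ℓ '' M) ≤ Bℓ)
    (C₃ : ℝ) (hC₃ : C₃ = CF * sSup ((fun x => ‖gradient ℓ x‖ ^ 2) '' M))
    (C₄ : ℝ) (hC₄ : C₄ = sSup ((fun x => ‖gradient ℓ x‖) '' M)
        + CF * sSup ((fun x => |lapW μ ℓ x - ρ|) '' M) / 2) :
    ∫ x in M, |ϑ x| * (Real.exp (τ * ℓ x) * |u x|) * μ x
      ≤ (C₃ * τ + C₄) * Real.exp (Bℓ * τ) * τ
          * ∫ x in M, (u x ^ 2 + ‖gradient w x‖ ^ 2) * μ x :=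
  integrated_multiplier_bound_general n M hMc μ hμpos hμ ℓ hℓ ρ τ hτ w hw u hu v hv ϑ hϑ CF hCF
    hFriedrichs Bℓ hBℓ C₃ hC₃ C₄ hC₄
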